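/- Let $(X,d)$ be a metric space, let $\alpha\colon X\to(0,1]$ and $\beta\colon X\to[0,1]$ with $\beta(x)\leq\alpha(x)$ for all $x$, set $\theta=\sup_{x\in X}\beta(x)/\alpha(x)$ and assume $\theta<1$. Let $N>0$ and let $g,h\in C^{0,\alpha(\cdot)}(X)$ satisfy $\|g\|_{C^{0,\alpha(\cdot)}(X)}\leq N$ and $\|h\|_{C^{0,\alpha(\cdot)}(X)}\leq N$. Then for all distinct $x,y\in X$ with $d(x,y)\leq 1$, $\frac{|g(x)-h(x)-g(y)+h(y)|}{d(x,y)^{\beta(x)}}\leq (2N)^{\theta}\,\big(2\sup_{z\in X}|g(z)-h(z)|\big)^{1-\theta}$, provided $2\sup_{z\in X}|g(z)-h(z)|\leq 1$. -/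

import Mathlib

/-!
With `M = sup |g - h|`, the increment `Δ = |(g - h)(x) - (g - h)(y)|` is bounded both by `2M`
and, through the Hölder seminorms, by `2N d(x,y)^α(x)`. Hence
`Δ = Δ^θ Δ^(1-θ) ≤ (2N)^θ (2M)^(1-θ) d(x,y)^(θ α(x))`, and `θ α(x) ≥ β(x)` together with
`d(x,y) ≤ 1` gives `d(x,y)^(θ α(x)) ≤ d(x,y)^β(x)`.
-/

open MeasureTheory Metric Set Filter

noncomputable def holderSemi {X : Type*} [MetricSpace X] (α : X → ℝ) (f : X → ℝ) : ℝ :=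
  ⨆ p : {p : X × X // p.1 ≠ p.2}, |f p.1.1 - f p.1.2| / dist p.1.1 p.1.2 ^ α p.1.1

noncomputable def holderNorm {X : Type*} [MetricSpace X] (α : X → ℝ) (f : X → ℝ) : ℝ :=
  (⨆ x, |f x|) + holderSemi α f

def MemVarHolder {X : Type*} [MetricSpace X] (α : X → ℝ) (f : X → ℝ) : Prop :=
  Continuous f ∧ BddAbove (Set.range fun x => |f x|) ∧
    BddAbove (Set.range fun p : {p : X × X // p.1 ≠ p.2} =>
      |f p.1.1 - f p.1.2| / dist p.1.1 p.1.2 ^ α p.1.1)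

noncomputable def maxFunR (f : ℝ → ℝ) (x : ℝ) : ℝ :=
  ⨆ r : {r : ℝ // 0 < r}, (1 / (2 * r.1)) * ∫ t in x - r.1..x + r.1, |f t|

lemma Real.le_rpow_mul_rpow_of_le_of_le {Δ A B θ : ℝ} (hΔ : 0 ≤ Δ) (hA : Δ ≤ A) (hB : Δ ≤ B)
    (hθ₀ : 0 ≤ θ) (hθ₁ : θ ≤ 1) : Δ ≤ A ^ θ * B ^ (1 - θ) := by
  calc Δ = Δ ^ (θ + (1 - θ)) := by rw [add_sub_cancel, Real.rpow_one]
    _ = Δ ^ θ * Δ ^ (1 - θ) := Real.rpow_add' hΔ (by norm_num)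
    _ ≤ A ^ θ * B ^ (1 - θ) := by
      gcongr
      exact Real.rpow_nonneg (hΔ.trans hA) _

lemma bddAbove_range_div_of_le {X : Type*} {α β : X → ℝ} (hα : ∀ x, 0 < α x)
    (hβα : ∀ x, β x ≤ α x) : BddAbove (range fun x => β x / α x) :=
  ⟨1, by rintro _ ⟨x, rfl⟩; exact div_le_one_of_le₀ (hβα x) (hα x).le⟩

section VarHolder

variable {X : Type*} [MetricSpace X] {α : X → ℝ} {f g h : X → ℝ}

lemma holderSemi_nonneg (α f : X → ℝ) : 0 ≤ holderSemi α f :=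
  Real.iSup_nonneg fun _ => div_nonneg (abs_nonneg _) (Real.rpow_nonneg dist_nonneg _)

lemma holderSemi_le_holderNorm (α f : X → ℝ) : holderSemi α f ≤ holderNorm α f :=
  le_add_of_nonneg_left (Real.iSup_nonneg fun _ => abs_nonneg _)

lemma holderNorm_nonneg (α f : X → ℝ) : 0 ≤ holderNorm α f :=
  (holderSemi_nonneg α f).trans (holderSemi_le_holderNorm α f)

lemma MemVarHolder.abs_sub_le (hf : MemVarHolder α f) {x y : X} (hxy : x ≠ y) :
    |f x - f y| ≤ holderSemi α f * dist x y ^ α x := by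
  have hpos : 0 < dist x y ^ α x := Real.rpow_pos_of_pos (dist_pos.2 hxy) _
  rw [← div_le_iff₀ hpos]
  exact le_ciSup hf.2.2 ⟨(x, y), hxy⟩

lemma MemVarHolder.bddAbove_abs_sub (hg : MemVarHolder α g) (hh : MemVarHolder α h) :
    BddAbove (range fun z => |g z - h z|) := by
  obtain ⟨Cg, hCg⟩ := hg.2.1
  obtain ⟨Ch, hCh⟩ := hh.2.1
  refine ⟨Cg + Ch, ?_⟩
  rintro _ ⟨z, rfl⟩
  exact (abs_sub _ _).trans (add_le_add (hCg ⟨z, rfl⟩) (hCh ⟨z, rfl⟩))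

lemma MemVarHolder.abs_sub_sub_le_two_mul_iSup (hg : MemVarHolder α g) (hh : MemVarHolder α h)
    (x y : X) : |g x - h x - g y + h y| ≤ 2 * ⨆ z, |g z - h z| := by
  have hle := le_ciSup (hg.bddAbove_abs_sub hh)
  calc |g x - h x - g y + h y| = |(g x - h x) - (g y - h y)| := by ring_nf
    _ ≤ |g x - h x| + |g y - h y| := abs_sub _ _
    _ ≤ 2 * ⨆ z, |g z - h z| := by linarith [hle x, hle y]

lemma MemVarHolder.abs_sub_sub_le_of_holderNorm_le {N : ℝ} (hg : MemVarHolder α g)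
    (hh : MemVarHolder α h) (hgN : holderNorm α g ≤ N) (hhN : holderNorm α h ≤ N) {x y : X}
    (hxy : x ≠ y) : |g x - h x - g y + h y| ≤ 2 * N * dist x y ^ α x := by
  have hd : 0 ≤ dist x y ^ α x := Real.rpow_nonneg dist_nonneg _
  have hgd : |g x - g y| ≤ N * dist x y ^ α x :=
    (hg.abs_sub_le hxy).trans (by gcongr; exact (holderSemi_le_holderNorm α g).trans hgN)
  have hhd : |h x - h y| ≤ N * dist x y ^ α x :=
    (hh.abs_sub_le hxy).trans (by gcongr; exact (holderSemi_le_holderNorm α h).trans hhN)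
  calc |g x - h x - g y + h y| = |(g x - g y) - (h x - h y)| := by ring_nf
    _ ≤ |g x - g y| + |h x - h y| := abs_sub _ _
    _ ≤ 2 * N * dist x y ^ α x := by linarith

end VarHolder

theorem holder_interpolation_estimate_general
    {X : Type*} [MetricSpace X]
    (α β : X → ℝ) (hα : ∀ x, α x ∈ Set.Ioc (0 : ℝ) 1) (hβ : ∀ x, β x ∈ Set.Icc (0 : ℝ) 1)
    (hβα : ∀ x, β x ≤ α x)
    (θ : ℝ) (hθdef : θ = ⨆ x, β x / α x)
    (N : ℝ) (g h : X → ℝ)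
    (hg : MemVarHolder α g) (hh : MemVarHolder α h)
    (hgN : holderNorm α g ≤ N) (hhN : holderNorm α h ≤ N)
    (x y : X) (hxy : x ≠ y) (hd : dist x y ≤ 1) :
    |g x - h x - g y + h y| / dist x y ^ β x ≤
      (2 * N) ^ θ * (2 * ⨆ z, |g z - h z|) ^ (1 - θ) := by
  have hd₀ : 0 < dist x y := dist_pos.2 hxy
  have hα₀ : 0 < α x := (hα x).1
  have hratio := bddAbove_range_div_of_le (fun z => (hα z).1) hβα
  have hθx : β x / α x ≤ θ := hθdef ▸ le_ciSup hratio x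
  have hθ₀ : 0 ≤ θ := (div_nonneg (hβ x).1 hα₀.le).trans hθx
  have hθ₁ : θ ≤ 1 := hθdef ▸ Real.iSup_le (fun z => div_le_one_of_le₀ (hβα z) (hα z).1.le) zero_le_one
  have hβθ : β x ≤ θ * α x := by rwa [div_le_iff₀ hα₀] at hθx
  have hN : 0 ≤ 2 * N := by linarith [holderNorm_nonneg α g]
  rw [div_le_iff₀ (Real.rpow_pos_of_pos hd₀ _)]
  calc |g x - h x - g y + h y|
      ≤ (2 * N * dist x y ^ α x) ^ θ * (2 * ⨆ z, |g z - h z|) ^ (1 - θ) :=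
        Real.le_rpow_mul_rpow_of_le_of_le (abs_nonneg _)
          (hg.abs_sub_sub_le_of_holderNorm_le hh hgN hhN hxy)
          (hg.abs_sub_sub_le_two_mul_iSup hh x y) hθ₀ hθ₁
    _ = (2 * N) ^ θ * (2 * ⨆ z, |g z - h z|) ^ (1 - θ) * dist x y ^ (θ * α x) := by
        rw [Real.mul_rpow hN (Real.rpow_nonneg hd₀.le _), mul_comm θ, Real.rpow_mul hd₀.le]
        ring
    _ ≤ (2 * N) ^ θ * (2 * ⨆ z, |g z - h z|) ^ (1 - θ) * dist x y ^ β x := by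
        refine mul_le_mul_of_nonneg_left (Real.rpow_le_rpow_of_exponent_ge hd₀ hd hβθ) ?_
        exact mul_nonneg (Real.rpow_nonneg hN _) (Real.rpow_nonneg
          ((abs_nonneg _).trans (hg.abs_sub_sub_le_two_mul_iSup hh x y)) _)

/-- Interpolation-type estimate between Hölder seminorms with
variable exponents. -/
theorem holder_interpolation_estimate
    {X : Type*} [MetricSpace X]
    (α β : X → ℝ) (hα : ∀ x, α x ∈ Set.Ioc (0 : ℝ) 1) (hβ : ∀ x, β x ∈ Set.Icc (0 : ℝ) 1)
    (hβα : ∀ x, β x ≤ α x)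
    (θ : ℝ) (hθdef : θ = ⨆ x, β x / α x) (hθ : θ < 1)
    (N : ℝ) (hN : 0 < N) (g h : X → ℝ)
    (hg : MemVarHolder α g) (hh : MemVarHolder α h)
    (hgN : holderNorm α g ≤ N) (hhN : holderNorm α h ≤ N)
    (hsup : 2 * (⨆ z, |g z - h z|) ≤ 1)
    (x y : X) (hxy : x ≠ y) (hd : dist x y ≤ 1) :
    |g x - h x - g y + h y| / dist x y ^ β x ≤
      (2 * N) ^ θ * (2 * ⨆ z, |g z - h z|) ^ (1 - θ) :=
  holder_interpolation_estimate_general α β hα hβ hβα θ hθdef N g h hg hh hgN hhN x y hxy hd
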